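/- If two invertible elements T₁ and T₂ of the Clifford algebra Cl(p,q) of even dimension n both satisfy T⁻¹eᵃT = γᵃ for the same fixed elements γᵃ (a = 1, ..., n), then T₂ = λT₁ for some nonzero scalar λ. -/

import Mathlib

/-!
If `z` commutes with every generator `e_a`, then `z = e_a z e_a⁻¹`, and conjugation by `e_a` is the
automorphism of the Clifford algebra induced by the sign change of all coordinates but the `a`-th.
In even dimension these sign changes generate the whole group `{±1}ⁿ`, so `z` is fixed by every
sign-change automorphism `σ_v`.

Averaging over `{±1}ⁿ` then forces `z` to be a scalar. For every set `A` of indices the twisted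
average `∑_v (∏_{a ∈ A} v_a) σ_v(x)` lies on the line through the blade `e_A`, by induction on `x`:
left multiplication by `e_a` turns the twist by `A` into the twist by `A ∆ {a}`. For `A = ∅` and
`z` fixed by every `σ_v` the average is `2ⁿ z`.
-/

open CliffordAlgebra

/-- The quadratic form of signature (p,q) on ℝⁿ, n = p + q. -/
noncomputable def Qpq (p q : ℕ) : QuadraticForm ℝ (Fin (p + q) → ℝ) :=
  QuadraticMap.weightedSumSquares ℝ (fun i => if (i : ℕ) < p then (1 : ℝ) else -1)

/-- The generators e¹, ..., eⁿ of the Clifford algebra Cl(p,q). -/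
noncomputable def gen (p q : ℕ) (a : Fin (p + q)) : CliffordAlgebra (Qpq p q) :=
  ι (Qpq p q) (Pi.single a 1)

/-- The volume element e¹e²⋯eⁿ of Cl(p,q). -/
noncomputable def vol (p q : ℕ) : CliffordAlgebra (Qpq p q) :=
  ((List.finRange (p + q)).map (gen p q)).prod

/-- The diagonal matrix η = diag(1,...,1,−1,...,−1) with p pluses and q minuses. -/
def eta (p q : ℕ) (a b : Fin (p + q)) : ℝ :=
  if a = b then (if (a : ℕ) < p then 1 else -1) else 0

open scoped symmDiff

theorem Finset.symmDiff_singleton_of_mem {α : Type*} [DecidableEq α] {A : Finset α} {a : α}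
    (h : a ∈ A) : A ∆ {a} = A.erase a := by
  ext b; by_cases b = a <;> simp_all [mem_symmDiff]

theorem Finset.symmDiff_singleton_of_notMem {α : Type*} [DecidableEq α] {A : Finset α} {a : α}
    (h : a ∉ A) : A ∆ {a} = insert a A := by
  ext b; by_cases b = a <;> simp_all [mem_symmDiff]

section SignChar

variable {I : Type*}

def signChar (A : Finset I) : (I → ℤˣ) →* ℤˣ where
  toFun v := ∏ a ∈ A, v a
  map_one' := Finset.prod_const_one
  map_mul' _ _ := Finset.prod_mul_distrib

@[simp]
theorem signChar_apply (A : Finset I) (v : I → ℤˣ) : signChar A v = ∏ a ∈ A, v a := rfl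

@[simp]
theorem signChar_empty : signChar (∅ : Finset I) = 1 := rfl

variable [DecidableEq I]

theorem signChar_symmDiff_singleton (A : Finset I) (a : I) (v : I → ℤˣ) :
    signChar (A ∆ {a}) v = signChar A v * v a := by
  by_cases ha : a ∈ A
  · rw [Finset.symmDiff_singleton_of_mem ha, signChar_apply, signChar_apply,
      ← Finset.mul_prod_erase A v ha, mul_comm (v a), mul_assoc, Int.units_mul_self, mul_one]
  · rw [Finset.symmDiff_singleton_of_notMem ha, signChar_apply, signChar_apply,
      Finset.prod_insert ha, mul_comm]

theorem sum_signChar [Fintype I] {A : Finset I} (hA : A.Nonempty) :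
    ∑ v, (signChar A v : ℤ) = 0 := by
  obtain ⟨a, ha⟩ := hA
  refine sum_hom_units_eq_zero ((Units.coeHom ℤ).comp (signChar A)) fun h => ?_
  have := DFunLike.congr_fun h (Pi.mulSingle a (-1))
  simp [Finset.prod_pi_mulSingle', ha] at this

-- In even dimension `∏ a, -Pi.mulSingle a (-1) = -1`, and `-1 * -Pi.mulSingle a (-1)` flips
-- the `a`-th sign alone.
theorem mem_closure_range_neg_mulSingle [Fintype I] (hI : Even (Fintype.card I)) (v : I → ℤˣ) :
    v ∈ Submonoid.closure (Set.range fun a : I => -Pi.mulSingle a (-1 : ℤˣ)) := by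
  set S := Submonoid.closure (Set.range fun a : I => -Pi.mulSingle a (-1 : ℤˣ))
  have hgen (a : I) : -Pi.mulSingle a (-1) ∈ S := Submonoid.subset_closure ⟨a, rfl⟩
  have hneg_one : (-1 : I → ℤˣ) ∈ S := by
    have : (-1 : I → ℤˣ) = ∏ a, -Pi.mulSingle a (-1) := by
      rw [Finset.prod_neg, Finset.univ_prod_mulSingle (fun _ => (-1 : ℤˣ)), Finset.card_univ,
        hI.neg_one_pow, one_mul]
      rfl
    rw [this]
    exact prod_mem fun a _ => hgen a
  have hsingle (a : I) (u : ℤˣ) : Pi.mulSingle a u ∈ S := by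
    rcases Int.units_eq_one_or u with rfl | rfl
    · rw [Pi.mulSingle_one]; exact one_mem S
    · simpa using mul_mem hneg_one (hgen a)
  rw [← Finset.univ_prod_mulSingle v]
  exact prod_mem fun a _ => hsingle a (v a)

end SignChar

namespace QuadraticMap

variable {R I : Type*} [CommRing R] [Fintype I] (w : I → R)

def signFlip (v : I → ℤˣ) : weightedSumSquares R w →qᵢ weightedSumSquares R w where
  toFun m i := v i • m i
  map_add' m m' := by ext i; exact smul_add _ _ _
  map_smul' c m := by ext i; exact smul_comm _ c _
  map_app' m := by
    simp only [weightedSumSquares_apply, smul_mul_smul_comm, Int.units_mul_self, one_smul]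

theorem signFlip_apply (v : I → ℤˣ) (m : I → R) (i : I) : signFlip w v m i = v i • m i := rfl

theorem weightedSumSquares_single [DecidableEq I] (a : I) :
    weightedSumSquares R w (Pi.single a 1) = w a := by
  simp [weightedSumSquares_apply, Pi.single_apply]

theorem polar_weightedSumSquares_single [DecidableEq I] (a : I) (m : I → R) :
    polar (weightedSumSquares R w) (Pi.single a 1) m = 2 * w a * m a := by
  simp only [polar, weightedSumSquares_apply, ← Finset.sum_sub_distrib]
  rw [Finset.sum_eq_single a]
  · simp only [Pi.add_apply, Pi.single_eq_same, smul_eq_mul]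
    ring
  · intro b _ hb
    simp [Pi.single_eq_of_ne hb]
  · simp

end QuadraticMap

namespace CliffordAlgebra

open QuadraticMap

variable {R I : Type*} [CommRing R] [Fintype I] (w : I → R)

local notation "𝒬" => weightedSumSquares R w

noncomputable def signAut : (I → ℤˣ) →* (CliffordAlgebra 𝒬 →ₐ[R] CliffordAlgebra 𝒬) where
  toFun v := map (signFlip w v)
  map_one' := by
    change _ = AlgHom.id R _
    rw [← map_id]
    congr 1
    ext m i
    simp [signFlip_apply]
  map_mul' v u := by
    change _ = (map _).comp (map _)
    rw [map_comp_map]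
    congr 1
    ext m i
    simp [signFlip_apply, mul_smul]

variable {w}

@[simp]
theorem signAut_ι (v : I → ℤˣ) (m : I → R) :
    signAut w v (ι 𝒬 m) = ι 𝒬 (fun i => v i • m i) :=
  map_apply_ι _ m

variable [DecidableEq I]

theorem signAut_ι_single (v : I → ℤˣ) (a : I) :
    signAut w v (ι 𝒬 (Pi.single a 1)) = v a • ι 𝒬 (Pi.single a 1) := by
  rw [signAut_ι, Units.smul_def, ← map_zsmul]
  congr 1
  ext i
  rcases eq_or_ne i a with rfl | h <;> simp [*, Units.smul_def]

theorem ι_single_mul_eq_signAut_mul (a : I) (x : CliffordAlgebra 𝒬) :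
    ι 𝒬 (Pi.single a 1) * x = signAut w (-Pi.mulSingle a (-1)) x * ι 𝒬 (Pi.single a 1) := by
  induction x using CliffordAlgebra.induction with
  | algebraMap r => rw [AlgHom.commutes, Algebra.commutes]
  | add x y hx hy => rw [mul_add, map_add, add_mul, hx, hy]
  | mul x y hx hy => rw [← mul_assoc, hx, mul_assoc, hy, map_mul, mul_assoc]
  | ι m =>
    have hflip : (fun i => (-Pi.mulSingle a (-1) : I → ℤˣ) i • m i)
        = (2 * m a) • Pi.single a 1 - m := by
      ext i
      rcases eq_or_ne i a with rfl | h
      · simp only [Pi.neg_apply, Pi.mulSingle_eq_same, neg_neg, one_smul, Pi.sub_apply,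
          Pi.smul_apply, Pi.single_eq_same, smul_eq_mul, mul_one]
        ring
      · simp [h, Units.smul_def]
    have hpolar := ι_mul_ι_add_swap (Q := 𝒬) (Pi.single a 1) m
    rw [polar_weightedSumSquares_single] at hpolar
    rw [signAut_ι, hflip, map_sub, map_smul, sub_mul, smul_mul_assoc, ι_sq_scalar,
      eq_sub_iff_add_eq, hpolar, Algebra.smul_def, ← map_mul]
    rw [weightedSumSquares_single, mul_right_comm]

theorem ι_single_mul_ι_single_comm_of_ne {a b : I} (h : a ≠ b) :
    ι 𝒬 (Pi.single a 1) * ι 𝒬 (Pi.single b 1) = -(ι 𝒬 (Pi.single b 1) * ι 𝒬 (Pi.single a 1)) :=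
  ι_mul_ι_comm_of_isOrtho <| isOrtho_polarBilin.mp <| by
    simp [polar_weightedSumSquares_single, h.symm]

variable (w) in
theorem prod_map_ι_single_eq_smul_of_perm {l l' : List I} (h : l.Perm l') :
    ∃ u : ℤˣ, (l.map fun a => ι 𝒬 (Pi.single a 1)).prod
      = u • (l'.map fun a => ι 𝒬 (Pi.single a 1)).prod := by
  induction h with
  | nil => exact ⟨1, by simp⟩
  | cons a _ ih =>
    obtain ⟨u, hu⟩ := ih
    exact ⟨u, by simp only [List.map_cons, List.prod_cons, hu, mul_smul_comm]⟩
  | swap a b l =>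
    rcases eq_or_ne b a with rfl | hab
    · exact ⟨1, by simp⟩
    · refine ⟨-1, ?_⟩
      simp only [List.map_cons, List.prod_cons, ← mul_assoc, ι_single_mul_ι_single_comm_of_ne hab]
      simp
  | trans _ _ ih₁ ih₂ =>
    obtain ⟨u₁, hu₁⟩ := ih₁
    obtain ⟨u₂, hu₂⟩ := ih₂
    exact ⟨u₁ * u₂, by rw [hu₁, hu₂, smul_smul]⟩

-- The order of the factors, that of `A.toList`, is arbitrary: only the line `R ∙ blade w A`
-- matters.
variable (w) in
noncomputable def blade (A : Finset I) : CliffordAlgebra 𝒬 :=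
  (A.toList.map fun a => ι 𝒬 (Pi.single a 1)).prod

@[simp]
theorem blade_empty : blade w (∅ : Finset I) = 1 := by
  simp [blade]

theorem ι_single_mul_blade_symmDiff_mem_span (A : Finset I) (a : I) :
    ι 𝒬 (Pi.single a 1) * blade w (A ∆ {a}) ∈ R ∙ blade w A := by
  by_cases ha : a ∈ A
  · have hperm : (a :: (A.erase a).toList).Perm A.toList := by
      conv_rhs => rw [← Finset.insert_erase ha]
      exact (Finset.toList_insert (Finset.notMem_erase a A)).symm
    obtain ⟨u, hu⟩ := prod_map_ι_single_eq_smul_of_perm w hperm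
    simp only [List.map_cons, List.prod_cons] at hu
    rw [Finset.symmDiff_singleton_of_mem ha]
    unfold blade
    rw [hu, Units.smul_def]
    exact Submodule.smul_of_tower_mem _ _ (Submodule.mem_span_singleton_self _)
  · obtain ⟨u, hu⟩ := prod_map_ι_single_eq_smul_of_perm w (Finset.toList_insert ha)
    simp only [List.map_cons, List.prod_cons] at hu
    rw [Finset.symmDiff_singleton_of_notMem ha]
    unfold blade
    rw [hu, mul_smul_comm, ← mul_assoc, ι_sq_scalar, ← Algebra.smul_def, Units.smul_def]
    exact Submodule.smul_of_tower_mem _ _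
      (Submodule.smul_mem _ _ (Submodule.mem_span_singleton_self _))

variable (w) in
noncomputable def signAvg (A : Finset I) : CliffordAlgebra 𝒬 →ₗ[R] CliffordAlgebra 𝒬 :=
  ∑ v, (signChar A v : ℤ) • (signAut w v).toLinearMap

theorem signAvg_apply (A : Finset I) (x : CliffordAlgebra 𝒬) :
    signAvg w A x = ∑ v, (signChar A v : ℤ) • signAut w v x := by
  simp [signAvg]

theorem signAvg_ι_single_mul (A : Finset I) (a : I) (x : CliffordAlgebra 𝒬) :
    signAvg w A (ι 𝒬 (Pi.single a 1) * x) = ι 𝒬 (Pi.single a 1) * signAvg w (A ∆ {a}) x := by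
  simp only [signAvg_apply, Finset.mul_sum, map_mul, signAut_ι_single, Units.smul_def,
    smul_mul_assoc, mul_smul_comm, smul_smul, signChar_symmDiff_singleton, Units.val_mul]

theorem signAvg_mem_span_blade (x : CliffordAlgebra 𝒬) (A : Finset I) :
    signAvg w A x ∈ R ∙ blade w A := by
  induction x using CliffordAlgebra.left_induction generalizing A with
  | algebraMap r =>
    simp only [signAvg_apply, AlgHom.commutes, ← Finset.sum_smul]
    rcases A.eq_empty_or_nonempty with rfl | hA
    · rw [blade_empty, Algebra.algebraMap_eq_smul_one]
      exact Submodule.smul_of_tower_mem _ _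
        (Submodule.smul_mem _ _ (Submodule.mem_span_singleton_self _))
    · rw [sum_signChar hA, zero_smul]
      exact Submodule.zero_mem _
  | add x y hx hy => rw [map_add]; exact Submodule.add_mem _ (hx A) (hy A)
  | ι_mul x m hx =>
    rw [pi_eq_sum_univ' m, map_sum, Finset.sum_mul, map_sum]
    refine Submodule.sum_mem _ fun a _ => ?_
    rw [map_smul, smul_mul_assoc, map_smul, signAvg_ι_single_mul]
    obtain ⟨c, hc⟩ := Submodule.mem_span_singleton.mp (hx (A ∆ {a}))
    rw [← hc, mul_smul_comm]
    exact Submodule.smul_mem _ _ (Submodule.smul_mem _ _ (ι_single_mul_blade_symmDiff_mem_span A a))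

theorem signAut_eq_self_of_commute (hI : Even (Fintype.card I)) (hw : ∀ a, IsUnit (w a))
    {z : CliffordAlgebra 𝒬} (hz : ∀ a, Commute (ι 𝒬 (Pi.single a 1)) z) (v : I → ℤˣ) :
    signAut w v z = z := by
  have hrefl (a : I) : signAut w (-Pi.mulSingle a (-1)) z = z := by
    have hunit : IsUnit (ι 𝒬 (Pi.single a (1 : R))) :=
      isUnit_ι_of_isUnit _ (by rw [weightedSumSquares_single]; exact hw a)
    exact hunit.mul_right_cancel ((ι_single_mul_eq_signAut_mul a z).symm.trans (hz a).eq)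
  induction mem_closure_range_neg_mulSingle hI v using Submonoid.closure_induction with
  | mem _ h => obtain ⟨a, rfl⟩ := h; exact hrefl a
  | one => rw [map_one]; rfl
  | mul u v _ _ hu hv => rw [map_mul, AlgHom.mul_apply, hv, hu]

theorem exists_algebraMap_eq_of_forall_signAut_eq (h2 : IsUnit (2 : R)) {z : CliffordAlgebra 𝒬}
    (hz : ∀ v, signAut w v z = z) : ∃ r : R, algebraMap R _ r = z := by
  have havg : signAvg w ∅ z = (2 : R) ^ Fintype.card I • z := by
    simp [signAvg_apply, hz, ← Nat.cast_smul_eq_nsmul R]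
  obtain ⟨c, hc⟩ := Submodule.mem_span_singleton.mp (signAvg_mem_span_blade z ∅)
  set u := (h2.pow (Fintype.card I)).unit
  refine ⟨↑u⁻¹ * c, ?_⟩
  rw [Algebra.algebraMap_eq_smul_one, mul_smul, ← blade_empty (w := w), hc, havg,
    ← IsUnit.unit_spec (h2.pow _), ← Units.smul_def, ← Units.smul_def, inv_smul_smul]

theorem exists_algebraMap_eq_of_forall_commute (hI : Even (Fintype.card I))
    (hw : ∀ a, IsUnit (w a)) (h2 : IsUnit (2 : R)) {z : CliffordAlgebra 𝒬}
    (hz : ∀ a, Commute (ι 𝒬 (Pi.single a 1)) z) : ∃ r : R, algebraMap R _ r = z :=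
  exists_algebraMap_eq_of_forall_signAut_eq h2 (signAut_eq_self_of_commute hI hw hz)

end CliffordAlgebra

theorem Units.commute_mul_inv_of_conj_eq {M : Type*} [Monoid M] {T₁ T₂ : Mˣ} {x : M}
    (h : ↑T₂⁻¹ * x * T₂ = ↑T₁⁻¹ * x * T₁) : Commute x ↑(T₂ * T₁⁻¹) :=
  calc x * ↑(T₂ * T₁⁻¹) = T₂ * (↑T₂⁻¹ * x * T₂) * ↑T₁⁻¹ := by simp [mul_assoc]
    _ = T₂ * (↑T₁⁻¹ * x * T₁) * ↑T₁⁻¹ := by rw [h]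
    _ = ↑(T₂ * T₁⁻¹) * x := by simp [mul_assoc]

/-- In even dimension, two invertible elements conjugating the generators to the same
elements differ by a nonzero scalar factor. -/
theorem stmt_7 (p q : ℕ) (hn : Even (p + q))
    (T₁ T₂ : (CliffordAlgebra (Qpq p q))ˣ) (γ : Fin (p + q) → CliffordAlgebra (Qpq p q))
    (h₁ : ∀ a, (↑T₁⁻¹ : CliffordAlgebra (Qpq p q)) * gen p q a * (↑T₁ : CliffordAlgebra (Qpq p q)) = γ a)
    (h₂ : ∀ a, (↑T₂⁻¹ : CliffordAlgebra (Qpq p q)) * gen p q a * (↑T₂ : CliffordAlgebra (Qpq p q)) = γ a) :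
    ∃ c : ℝ, c ≠ 0 ∧ (↑T₂ : CliffordAlgebra (Qpq p q)) = c • (↑T₁ : CliffordAlgebra (Qpq p q)) := by
  have hcomm (a : Fin (p + q)) : Commute (gen p q a) ↑(T₂ * T₁⁻¹) :=
    Units.commute_mul_inv_of_conj_eq ((h₂ a).trans (h₁ a).symm)
  obtain ⟨r, hr⟩ := CliffordAlgebra.exists_algebraMap_eq_of_forall_commute
    (w := fun i : Fin (p + q) => if (i : ℕ) < p then (1 : ℝ) else -1)
    (by simpa using hn) (fun a => by split_ifs <;> simp) (by norm_num) hcomm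
  change algebraMap ℝ (CliffordAlgebra (Qpq p q)) r = _ at hr
  refine ⟨r, ?_, ?_⟩
  · rintro rfl
    exact (T₂ * T₁⁻¹).ne_zero (by rw [← hr, map_zero])
  · rw [Algebra.smul_def, hr, Units.val_mul, mul_assoc, Units.inv_mul, mul_one]
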